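/- arXiv:1405.3819 — 3 statements merged into one kernel-verified Lean document; each statement's English description precedes it below -/
import Mathlib

section
/- Let M be a principally Goldie*-lifting module over a ring R and let N be a submodule of M. If for every cyclic direct summand D of M the submodule (N + D)/N is a direct summand of M/N, then M/N is principally Goldie*-lifting. -/
/-- A submodule `K` is small (superfluous) in `M`:
`K + N = M` implies `N = M` for all submodules `N`. -/
def IsSmallSub {R M : Type*} [Ring R] [AddCommGroup M] [Module R M]
    (K : Submodule R M) : Prop :=
  ∀ N : Submodule R M, K ⊔ N = ⊤ → N = ⊤

/-- `K` is small in the submodule `N` (where `K ≤ N`):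
for every submodule `L ≤ N`, `K + L = N` implies `L = N`. -/
def IsSmallIn {R M : Type*} [Ring R] [AddCommGroup M] [Module R M]
    (K N : Submodule R M) : Prop :=
  ∀ L : Submodule R M, L ≤ N → K ⊔ L = N → L = N

/-- The β* relation: `X β* Y` iff `(X+Y)/X ≪ M/X` and `(X+Y)/Y ≪ M/Y`. -/
def BetaStar {R M : Type*} [Ring R] [AddCommGroup M] [Module R M]
    (X Y : Submodule R M) : Prop :=
  IsSmallSub ((X ⊔ Y).map X.mkQ) ∧ IsSmallSub ((X ⊔ Y).map Y.mkQ)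

/-- A submodule is cyclic if it is generated by a single element. -/
def IsCyclicSub {R M : Type*} [Ring R] [AddCommGroup M] [Module R M]
    (X : Submodule R M) : Prop :=
  ∃ m : M, X = Submodule.span R {m}

/-- A submodule is a direct summand if it has a complement. -/
def IsDirectSummand {R M : Type*} [Ring R] [AddCommGroup M] [Module R M]
    (D : Submodule R M) : Prop :=
  ∃ D' : Submodule R M, IsCompl D D'

/-- `M` is principally Goldie*-lifting: every cyclic submodule is β* equivalent
to a direct summand. -/
def PrinGStarLifting (R M : Type*) [Ring R] [AddCommGroup M] [Module R M] : Prop :=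
  ∀ X : Submodule R M, IsCyclicSub X → ∃ D : Submodule R M, IsDirectSummand D ∧ BetaStar X D

/-- The radical of `M`: the intersection of all maximal proper submodules
(equal to `M` if there are none). -/
def RadSub (R M : Type*) [Ring R] [AddCommGroup M] [Module R M] : Submodule R M :=
  sInf {N : Submodule R M | IsCoatom N}


/-! Two submodules are β* equivalent exactly when they have the same supplements:
`X ⊔ A = ⊤ ↔ Y ⊔ A = ⊤` for every `A`. In this form β* equivalence is transported along any
surjection `f`, because `X.map f ⊔ A = ⊤ ↔ X ⊔ A.comap f = ⊤`. A cyclic submodule of `M ⧸ N` is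
the image of some `R ∙ m`; choose a summand `D ⊕ D' = M` with `R ∙ m` β* `D`. Then `D'` is a
supplement of `R ∙ m`, so the projection onto `D` along `D'` maps `R ∙ m` onto `D`, which is
therefore cyclic; by hypothesis its image in `M ⧸ N` is a summand, β* equivalent to the image
of `R ∙ m`. -/

open Submodule

section

variable {R M M₂ : Type*} [Ring R] [AddCommGroup M] [Module R M] [AddCommGroup M₂] [Module R M₂]

theorem sup_map_eq_top_iff_of_surjective {f : M →ₗ[R] M₂} (hf : Function.Surjective f)
    (X : Submodule R M) (A : Submodule R M₂) :
    X.map f ⊔ A = ⊤ ↔ X ⊔ A.comap f = ⊤ := by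
  have hmap : X.map f ⊔ A = (X ⊔ A.comap f).map f := by
    rw [Submodule.map_sup, map_comap_eq_of_surjective hf]
  rw [hmap, LinearMap.map_eq_top_iff (LinearMap.range_eq_top.2 hf), sup_assoc,
    sup_eq_left.2 (LinearMap.ker_le_comap f)]

theorem isSmallSub_map_mkQ_sup_iff (X Y : Submodule R M) :
    IsSmallSub ((X ⊔ Y).map X.mkQ) ↔ ∀ A : Submodule R M, Y ⊔ A = ⊤ → X ⊔ A = ⊤ := by
  have hX : ∀ B : Submodule R (M ⧸ X), X ≤ B.comap X.mkQ := fun B =>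
    (ker_mkQ X).symm.le.trans (LinearMap.ker_le_comap _)
  constructor
  · intro hsmall A hYA
    rw [← map_mkQ_eq_top]
    refine hsmall _ ((sup_map_eq_top_iff_of_surjective X.mkQ_surjective _ _).2 ?_)
    exact top_le_iff.1 (hYA ▸ sup_le_sup le_sup_right (le_comap_map _ _))
  · intro h B hB
    rw [sup_map_eq_top_iff_of_surjective X.mkQ_surjective, sup_assoc,
      sup_eq_right.2 (le_sup_right.trans' (hX B))] at hB
    have hcomap : B.comap X.mkQ = ⊤ := by simpa [sup_eq_right.2 (hX B)] using h _ hB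
    exact comap_injective_of_surjective X.mkQ_surjective (by rw [hcomap, comap_top])

theorem betaStar_iff (X Y : Submodule R M) :
    BetaStar X Y ↔ ∀ A : Submodule R M, X ⊔ A = ⊤ ↔ Y ⊔ A = ⊤ := by
  rw [BetaStar, isSmallSub_map_mkQ_sup_iff, sup_comm, isSmallSub_map_mkQ_sup_iff]
  exact ⟨fun h A => ⟨h.2 A, h.1 A⟩, fun h => ⟨fun A => (h A).2, fun A => (h A).1⟩⟩

theorem BetaStar.map {X Y : Submodule R M} (hXY : BetaStar X Y) {f : M →ₗ[R] M₂}
    (hf : Function.Surjective f) : BetaStar (X.map f) (Y.map f) := by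
  rw [betaStar_iff] at hXY ⊢
  intro A
  rw [sup_map_eq_top_iff_of_surjective hf, sup_map_eq_top_iff_of_surjective hf]
  exact hXY _

theorem IsCyclicSub.map {X : Submodule R M} (hX : IsCyclicSub X) (f : M →ₗ[R] M₂) :
    IsCyclicSub (X.map f) := by
  obtain ⟨m, rfl⟩ := hX
  exact ⟨f m, by rw [map_span, Set.image_singleton]⟩

theorem IsCyclicSub.of_betaStar_of_isCompl {X D D' : Submodule R M} (hX : IsCyclicSub X)
    (hXD : BetaStar X D) (hDD' : IsCompl D D') : IsCyclicSub D := by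
  have hXD' : X ⊔ D' = ⊤ := ((betaStar_iff X D).1 hXD D').2 hDD'.sup_eq_top
  set π := D.projection D' hDD'
  have hD : D = X.map π := calc
    D = LinearMap.range π := (range_projection hDD').symm
    _ = (X ⊔ LinearMap.ker π).map π := by rw [ker_projection, hXD', LinearMap.range_eq_map]
    _ = X.map π := by
      rw [Submodule.map_sup, sup_eq_left.2 (map_le_iff_le_comap.2 (LinearMap.ker_le_comap _))]
  exact hD ▸ hX.map π

end

/-- If `M` is principally Goldie*-lifting and `N ≤ M` is such that
`(N + D)/N` is a direct summand of `M/N` for every cyclic direct summand `D`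
of `M`, then `M/N` is principally Goldie*-lifting. -/
theorem stmt_9 {R M : Type*} [Ring R] [AddCommGroup M] [Module R M]
    (hM : PrinGStarLifting R M) (N : Submodule R M)
    (h : ∀ D : Submodule R M, IsCyclicSub D → IsDirectSummand D →
      IsDirectSummand ((N ⊔ D).map N.mkQ)) :
    PrinGStarLifting R (M ⧸ N) := by
  rintro _ ⟨x, rfl⟩
  obtain ⟨m, rfl⟩ := N.mkQ_surjective x
  have hX : IsCyclicSub (span R {m}) := ⟨m, rfl⟩
  obtain ⟨D, ⟨D', hDD'⟩, hXD⟩ := hM _ hX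
  refine ⟨(N ⊔ D).map N.mkQ, h D (hX.of_betaStar_of_isCompl hXD hDD') ⟨D', hDD'⟩, ?_⟩
  have hXq : span R {N.mkQ m} = (span R {m}).map N.mkQ := by rw [map_span, Set.image_singleton]
  rw [hXq, Submodule.map_sup, mkQ_map_self, bot_sup_eq]
  exact hXD.map N.mkQ_surjective
end

section
/- Let M be a principally Goldie*-lifting module over a ring R and let N be a projection invariant submodule of M (e(N) ⊆ N for every idempotent R-linear endomorphism e of M). Then M/N is principally Goldie*-lifting. In particular, M/A is principally Goldie*-lifting for every fully invariant submodule A of M. -/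
/-! Push `X β* D`, with `X` cyclic and `D ⊕ D' = M`, forward along `π : M → M/N`; every cyclic
submodule of `M/N` is such a `π(X)`. Smallness passes along the epimorphisms
`M/X → (M/N)/π(X)` and `M/D → (M/N)/π(D)`, so `π(X) β* π(D)`. And `π(D) ⊕ π(D') = M/N`: if
`π d = π d'` then `d - d' ∈ N`, so projecting onto `D` along `D'` gives `d ∈ N`, because `N` is
projection invariant. -/

open Submodule

section

variable {R M : Type*} [Ring R] [AddCommGroup M] [Module R M]

theorem IsSmallSub.map_of_surjective {M₂ : Type*} [AddCommGroup M₂] [Module R M₂]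
    {f : M →ₗ[R] M₂} (hf : Function.Surjective f) {K : Submodule R M} (hK : IsSmallSub K) :
    IsSmallSub (K.map f) := by
  intro L hL
  have hsup : K ⊔ L.comap f = ⊤ := by
    rw [← comap_map_eq_self (le_sup_of_le_right (LinearMap.ker_le_comap f)),
      Submodule.map_sup, map_comap_eq_of_surjective hf, hL, comap_top]
  rw [← map_comap_eq_of_surjective hf L, hK _ hsup, Submodule.map_top,
    LinearMap.range_eq_top.mpr hf]

theorem IsSmallSub.map_mkQ_map_mkQ (N : Submodule R M) {P S : Submodule R M}
    (h : IsSmallSub (S.map P.mkQ)) :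
    IsSmallSub ((S.map N.mkQ).map (P.map N.mkQ).mkQ) := by
  have hcomm := P.mapQ_mkQ (P.map N.mkQ) N.mkQ (h := le_comap_map N.mkQ P)
  have hsurj : Function.Surjective (P.mapQ (P.map N.mkQ) N.mkQ (le_comap_map N.mkQ P)) := by
    refine Function.Surjective.of_comp (g := P.mkQ) ?_
    rw [← LinearMap.coe_comp, hcomm, LinearMap.coe_comp]
    exact (mkQ_surjective _).comp (mkQ_surjective _)
  rw [← map_comp, ← hcomm, map_comp]
  exact h.map_of_surjective hsurj

theorem BetaStar.map_mkQ (N : Submodule R M) {X Y : Submodule R M} (h : BetaStar X Y) :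
    BetaStar (X.map N.mkQ) (Y.map N.mkQ) := by
  rw [BetaStar, ← Submodule.map_sup]
  exact ⟨h.1.map_mkQ_map_mkQ N, h.2.map_mkQ_map_mkQ N⟩

theorem isCompl_map_mkQ_of_map_projection_le {D D' N : Submodule R M} (h : IsCompl D D')
    (hN : N.map (D.projection D' h) ≤ N) : IsCompl (D.map N.mkQ) (D'.map N.mkQ) := by
  constructor
  · rw [disjoint_def]
    rintro _ ⟨d, hd, rfl⟩ ⟨d', hd', hdd'⟩
    have hdiff : d' - d ∈ N := by
      rw [← N.ker_mkQ, LinearMap.mem_ker, map_sub, hdd', sub_self]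
    have hdN : d ∈ N := by
      simpa [projection_apply_of_mem_left h hd, projection_apply_of_mem_right h hd'] using
        hN (mem_map_of_mem hdiff)
    simpa using hdN
  · rw [codisjoint_iff, ← Submodule.map_sup, h.sup_eq_top, Submodule.map_top, range_mkQ]

theorem PrinGStarLifting.quotient (hM : PrinGStarLifting R M) {N : Submodule R M}
    (hN : ∀ e : M →ₗ[R] M, IsIdempotentElem e → N.map e ≤ N) :
    PrinGStarLifting R (M ⧸ N) := by
  rintro _ ⟨x, rfl⟩
  obtain ⟨m, rfl⟩ := N.mkQ_surjective x
  obtain ⟨D, ⟨D', hDD'⟩, hXD⟩ := hM _ ⟨m, rfl⟩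
  have hN' := hN _ (isIdempotentElem_projection hDD')
  refine ⟨D.map N.mkQ, ⟨D'.map N.mkQ, isCompl_map_mkQ_of_map_projection_le hDD' hN'⟩, ?_⟩
  simpa [map_span] using hXD.map_mkQ N

end

/-- If `M` is principally Goldie*-lifting and `N` is projection
invariant then `M/N` is principally Goldie*-lifting; in particular `M/A` is
principally Goldie*-lifting for every fully invariant submodule `A`. -/
theorem stmt_11 {R M : Type*} [Ring R] [AddCommGroup M] [Module R M]
    (hM : PrinGStarLifting R M) (N : Submodule R M)
    (hN : ∀ e : M →ₗ[R] M, e ∘ₗ e = e → N.map e ≤ N) :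
    PrinGStarLifting R (M ⧸ N) ∧
      ∀ A : Submodule R M, (∀ f : M →ₗ[R] M, A.map f ≤ A) →
        PrinGStarLifting R (M ⧸ A) :=
  ⟨hM.quotient hN, fun _ hA => hM.quotient fun e _ => hA e⟩
end

section
/- Let M be a π-projective module over a ring R (for all submodules U, V of M with U + V = M there exists an R-linear endomorphism f of M with f(M) ⊆ U and (id − f)(M) ⊆ V). Then the following are equivalent: (a) M is principally lifting; (b) M is principally Goldie*-lifting; (c) M is ⊕-principally supplemented. -/
/-!
(a) ⇒ (b): if `M = D ⊕ D'` with `D ≤ X` and `X ∩ D'` small, the modular law gives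
`X = D ⊕ (X ∩ D')`, so `X + D = X` and `(X + D)/D` is the image of the small submodule `X ∩ D'`.

(b) ⇒ (c): if `X β* D` and `M = D ⊕ D'`, then `D'` is a supplement of `X`: smallness of
`(X + D)/X` in `M/X` gives `D' + X = M`, and smallness of `(X + D)/D` in `M/D` forces every
`L ≤ D'` with `(D' ∩ X) + L = D'` to satisfy `D + L = M`, hence `L = D'`.

(c) ⇒ (a) is where π-projectivity enters: if `D` is a summand with complement `D''` and
`D + X = M`, an endomorphism `f` with `f(M) ⊆ X` and `(1 - f)(M) ⊆ D` carries `D''` onto a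
complement of `D` inside `X`, and `X ∩ D`, being small in `D`, is small in `M`.
-/

section

variable {R M : Type*} [Ring R] [AddCommGroup M] [Module R M]

variable (R M) in
def IsPiProjective : Prop :=
  ∀ U V : Submodule R M, U ⊔ V = ⊤ →
    ∃ f : M →ₗ[R] M, LinearMap.range f ≤ U ∧ LinearMap.range (LinearMap.id - f) ≤ V

variable (R M) in
def PrincipallyLifting : Prop :=
  ∀ X : Submodule R M, IsCyclicSub X →
    ∃ D D' : Submodule R M, IsCompl D D' ∧ D ≤ X ∧ IsSmallSub (X ⊓ D')

variable (R M) in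
def DirectSumPrincipallySupplemented : Prop :=
  ∀ X : Submodule R M, IsCyclicSub X →
    ∃ D : Submodule R M, IsDirectSummand D ∧ D ⊔ X = ⊤ ∧ IsSmallIn (D ⊓ X) D

theorem isSmallSub_bot : IsSmallSub (⊥ : Submodule R M) :=
  fun N hN => by rwa [bot_sup_eq] at hN

theorem IsSmallSub.map {M' : Type*} [AddCommGroup M'] [Module R M'] {K : Submodule R M}
    (hK : IsSmallSub K) {f : M →ₗ[R] M'} (hf : Function.Surjective f) :
    IsSmallSub (K.map f) := by
  intro N hN
  have hker : LinearMap.ker f ≤ K ⊔ N.comap f :=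
    le_sup_of_le_right (LinearMap.ker_le_comap f)
  have hcomap : K ⊔ N.comap f = ⊤ := by
    rw [← Submodule.comap_map_eq_self hker, Submodule.map_sup,
      Submodule.map_comap_eq_of_surjective hf, hN, Submodule.comap_top]
  rw [← Submodule.map_comap_eq_of_surjective hf N, hK _ hcomap, Submodule.map_top,
    LinearMap.range_eq_top.mpr hf]

theorem IsSmallIn.isSmallSub {K D : Submodule R M} (hKD : K ≤ D) (h : IsSmallIn K D) :
    IsSmallSub K := by
  intro N hN
  have hsup : K ⊔ N ⊓ D = D := by rw [← sup_inf_assoc_of_le N hKD, hN, top_inf_eq]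
  have hDN : D ≤ N := by
    rw [← h _ inf_le_right hsup]
    exact inf_le_left
  rw [eq_top_iff, ← hN]
  exact sup_le (hKD.trans hDN) le_rfl

theorem sup_eq_top_of_isSmallSub_map_mkQ {X Y N : Submodule R M}
    (h : IsSmallSub ((X ⊔ Y).map X.mkQ)) (hN : X ⊔ Y ⊔ N = ⊤) : X ⊔ N = ⊤ := by
  have hmap : (X ⊔ Y).map X.mkQ ⊔ N.map X.mkQ = ⊤ := by
    rw [← Submodule.map_sup, hN, Submodule.map_top, Submodule.range_mkQ]
  simpa only [Submodule.map_mkQ_eq_top] using h _ hmap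

theorem IsCompl.isCompl_map_of_range_id_sub_le {D D' : Submodule R M} (h : IsCompl D D')
    {f : M →ₗ[R] M} (hf : LinearMap.range (LinearMap.id - f) ≤ D) :
    IsCompl D (D'.map f) := by
  have hsub : ∀ m, m - f m ∈ D := fun m => hf ⟨m, rfl⟩
  constructor
  · rw [Submodule.disjoint_def]
    rintro _ hxD ⟨d', hd', rfl⟩
    have hd'D : d' ∈ D := by simpa using D.add_mem hxD (hsub d')
    rw [(Submodule.disjoint_def.mp h.disjoint) d' hd'D hd', map_zero]
  · rw [codisjoint_iff, eq_top_iff, ← h.sup_eq_top]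
    refine sup_le le_sup_left fun d' hd' => ?_
    have hmem := Submodule.add_mem_sup (hsub d') (Submodule.mem_map_of_mem (f := f) hd')
    rwa [sub_add_cancel] at hmem

theorem betaStar_of_isCompl_of_le {X D D' : Submodule R M} (hDD' : IsCompl D D')
    (hDX : D ≤ X) (hsmall : IsSmallSub (X ⊓ D')) : BetaStar X D := by
  have hX : D ⊔ X ⊓ D' = X := by
    rw [inf_comm, ← sup_inf_assoc_of_le D' hDX, hDD'.sup_eq_top, top_inf_eq]
  rw [BetaStar, sup_eq_left.mpr hDX, Submodule.mkQ_map_self]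
  refine ⟨isSmallSub_bot, ?_⟩
  rw [← hX, Submodule.map_sup, Submodule.mkQ_map_self, bot_sup_eq]
  exact hsmall.map D.mkQ_surjective

theorem BetaStar.sup_eq_top_and_isSmallIn_of_isCompl {X D D' : Submodule R M}
    (h : BetaStar X D) (hDD' : IsCompl D D') : D' ⊔ X = ⊤ ∧ IsSmallIn (D' ⊓ X) D' := by
  refine ⟨?_, fun L hL hsup => ?_⟩
  · rw [sup_comm]
    exact sup_eq_top_of_isSmallSub_map_mkQ h.1
      (by rw [sup_assoc, hDD'.sup_eq_top, sup_top_eq])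
  · have hD'le : D' ≤ X ⊔ L := hsup ▸ sup_le_sup_right inf_le_right L
    have hDL : D ⊔ L = ⊤ := by
      refine sup_eq_top_of_isSmallSub_map_mkQ (Y := X) (by rw [sup_comm]; exact h.2) ?_
      rw [eq_top_iff, ← hDD'.sup_eq_top, sup_assoc]
      exact sup_le_sup_left hD'le D
    refine eq_of_le_of_inf_le_of_sup_le hL ?_ ?_ (z := D)
    · rw [inf_comm, hDD'.inf_eq_bot]
      exact bot_le
    · rw [sup_comm L, hDL]
      exact le_top

theorem exists_isCompl_le_isSmallSub_of_supplement (hpi : IsPiProjective R M)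
    {X D : Submodule R M} (hD : IsDirectSummand D) (hDX : D ⊔ X = ⊤)
    (hsmall : IsSmallIn (D ⊓ X) D) :
    ∃ A D' : Submodule R M, IsCompl A D' ∧ A ≤ X ∧ IsSmallSub (X ⊓ D') := by
  obtain ⟨D'', hDD''⟩ := hD
  obtain ⟨f, hfX, hfD⟩ := hpi X D (by rwa [sup_comm])
  refine ⟨D''.map f, D, (hDD''.isCompl_map_of_range_id_sub_le hfD).symm,
    LinearMap.map_le_range.trans hfX, ?_⟩
  rw [inf_comm]
  exact hsmall.isSmallSub inf_le_left

theorem PrincipallyLifting.prinGStarLifting (h : PrincipallyLifting R M) :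
    PrinGStarLifting R M := fun X hX => by
  obtain ⟨D, D', hDD', hDX, hsmall⟩ := h X hX
  exact ⟨D, ⟨D', hDD'⟩, betaStar_of_isCompl_of_le hDD' hDX hsmall⟩

theorem PrinGStarLifting.directSumPrincipallySupplemented (h : PrinGStarLifting R M) :
    DirectSumPrincipallySupplemented R M := fun X hX => by
  obtain ⟨D, ⟨D', hDD'⟩, hXD⟩ := h X hX
  exact ⟨D', ⟨D, hDD'.symm⟩, hXD.sup_eq_top_and_isSmallIn_of_isCompl hDD'⟩

theorem DirectSumPrincipallySupplemented.principallyLifting (hpi : IsPiProjective R M)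
    (h : DirectSumPrincipallySupplemented R M) : PrincipallyLifting R M := fun X hX => by
  obtain ⟨D, hD, hDX, hsmall⟩ := h X hX
  exact exists_isCompl_le_isSmallSub_of_supplement hpi hD hDX hsmall

end

/-- For a π-projective module `M` the following are equivalent:
(a) principally lifting, (b) principally Goldie*-lifting,
(c) ⊕-principally supplemented. -/
theorem stmt_16 {R M : Type*} [Ring R] [AddCommGroup M] [Module R M]
    (hpi : ∀ U V : Submodule R M, U ⊔ V = ⊤ →
      ∃ f : M →ₗ[R] M, LinearMap.range f ≤ U ∧
        LinearMap.range (LinearMap.id - f) ≤ V) :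
    ((∀ X : Submodule R M, IsCyclicSub X →
        ∃ D D' : Submodule R M, IsCompl D D' ∧ D ≤ X ∧ IsSmallSub (X ⊓ D')) ↔
      PrinGStarLifting R M) ∧
    (PrinGStarLifting R M ↔
      (∀ X : Submodule R M, IsCyclicSub X →
        ∃ D : Submodule R M, IsDirectSummand D ∧ D ⊔ X = ⊤ ∧
          IsSmallIn (D ⊓ X) D)) := by
  have hpi : IsPiProjective R M := hpi
  have hca := DirectSumPrincipallySupplemented.principallyLifting hpi
  exact ⟨⟨PrincipallyLifting.prinGStarLifting,
      fun h => hca h.directSumPrincipallySupplemented⟩,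
    ⟨PrinGStarLifting.directSumPrincipallySupplemented,
      fun h => (hca h).prinGStarLifting⟩⟩
end
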